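/- For a hyperelastic material with constitutive functions P_rad(x,y) = x³y² ∂_y W(x,y) and P_tan(x,y) = (1/2)x³y(x ∂_x W(x,y) − y ∂_y W(x,y)) derived from a C³ stored energy W, satisfying P_rad(x,1) = P_tan(x,1) for all x > 0, one has x ∂_x P_rad(x,1) + 2Θ(x,1) = 3 ∂_y P_rad(x,1) for all x > 0, where Θ(x,y) = (P_tan(x,y) − P_rad(x,y))/(1−y) and Θ(x,1) = ∂_y P_rad(x,1) − ∂_y P_tan(x,1). -/

import Mathlib

/-!
At the centre, isotropy `P_rad(x,1) = P_tan(x,1)` says `x ∂ₓW = 3 ∂_yW` at `(x,1)`. Expanding the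
three derivatives of `P_rad` and `P_tan` at `(x,1)` in first and second partials of `W`, the
`∂²_yW` terms cancel identically and the mixed partials cancel by Schwarz's theorem, leaving
`x³ (3 ∂_yW − x ∂ₓW)`, which vanishes by isotropy at the single point `(x,1)`.
-/

open Set

/-- Constitutive function P_rad(x,y) = x³ y² ∂_y W(x,y). -/
noncomputable def PradE (W : ℝ → ℝ → ℝ) (x y : ℝ) : ℝ :=
  x ^ 3 * y ^ 2 * deriv (fun t => W x t) y

/-- Constitutive function P_tan(x,y) = (1/2) x³ y (x ∂_x W − y ∂_y W). -/
noncomputable def PtanE (W : ℝ → ℝ → ℝ) (x y : ℝ) : ℝ :=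
  (1 / 2) * x ^ 3 * y *
    (x * deriv (fun s => W s y) x - y * deriv (fun t => W x t) y)

open Function Filter Topology

section Slices

variable {E : Type*} [NormedAddCommGroup E] [NormedSpace ℝ E] {F : ℝ × ℝ → E}
  {F' : ℝ × ℝ →L[ℝ] E} {x y : ℝ}

theorem HasFDerivAt.hasDerivAt_slice_fst (hF : HasFDerivAt F F' (x, y)) :
    HasDerivAt (fun s => F (s, y)) (F' (1, 0)) x :=
  hF.comp_hasDerivAt x ((hasDerivAt_id x).prodMk (hasDerivAt_const x y))

theorem HasFDerivAt.hasDerivAt_slice_snd (hF : HasFDerivAt F F' (x, y)) :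
    HasDerivAt (fun t => F (x, t)) (F' (0, 1)) y :=
  hF.comp_hasDerivAt y ((hasDerivAt_const y x).prodMk (hasDerivAt_id y))

theorem Filter.Eventually.slice_fst {P : ℝ × ℝ → Prop} (h : ∀ᶠ q in 𝓝 (x, y), P q) :
    ∀ᶠ s in 𝓝 x, P (s, y) :=
  ((continuous_id.prodMk continuous_const).tendsto x).eventually h

theorem Filter.Eventually.slice_snd {P : ℝ × ℝ → Prop} (h : ∀ᶠ q in 𝓝 (x, y), P q) :
    ∀ᶠ t in 𝓝 y, P (x, t) :=
  ((continuous_const.prodMk continuous_id).tendsto y).eventually h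

end Slices

section SecondDerivatives

variable {𝕜 E F : Type*} [NontriviallyNormedField 𝕜] [NormedAddCommGroup E] [NormedSpace 𝕜 E]
  [NormedAddCommGroup F] [NormedSpace 𝕜 F] {f : E → F} {x : E}

theorem ContDiffAt.eventually_differentiableAt (hf : ContDiffAt 𝕜 2 f x) :
    ∀ᶠ y in 𝓝 x, DifferentiableAt 𝕜 f y :=
  (hf.eventually (by simp)).mono fun _ hy => hy.differentiableAt (by norm_num)

theorem ContDiffAt.differentiableAt_fderiv (hf : ContDiffAt 𝕜 2 f x) :
    DifferentiableAt 𝕜 (fderiv 𝕜 f) x :=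
  (hf.fderiv_right (m := 1) (by norm_num)).differentiableAt one_ne_zero

end SecondDerivatives

section Pressures

variable {W : ℝ → ℝ → ℝ} {x y : ℝ}

theorem hasDerivAt_snd_of_differentiableAt_uncurry (hW : DifferentiableAt ℝ (uncurry W) (x, y)) :
    HasDerivAt (W x) (fderiv ℝ (uncurry W) (x, y) (0, 1)) y :=
  hW.hasFDerivAt.hasDerivAt_slice_snd

theorem hasDerivAt_fst_of_differentiableAt_uncurry (hW : DifferentiableAt ℝ (uncurry W) (x, y)) :
    HasDerivAt (W · y) (fderiv ℝ (uncurry W) (x, y) (1, 0)) x :=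
  hW.hasFDerivAt.hasDerivAt_slice_fst

theorem PradE_eq_fderiv (hW : DifferentiableAt ℝ (uncurry W) (x, y)) :
    PradE W x y = x ^ 3 * y ^ 2 * fderiv ℝ (uncurry W) (x, y) (0, 1) := by
  rw [PradE, (hasDerivAt_snd_of_differentiableAt_uncurry hW).deriv]

theorem PtanE_eq_fderiv (hW : DifferentiableAt ℝ (uncurry W) (x, y)) :
    PtanE W x y = 1 / 2 * x ^ 3 * y *
      (x * fderiv ℝ (uncurry W) (x, y) (1, 0) - y * fderiv ℝ (uncurry W) (x, y) (0, 1)) := by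
  rw [PtanE, (hasDerivAt_snd_of_differentiableAt_uncurry hW).deriv,
    (hasDerivAt_fst_of_differentiableAt_uncurry hW).deriv]

variable (hW : ContDiffAt ℝ 2 (uncurry W) (x, y))
include hW

theorem hasDerivAt_fderiv_apply_slice_fst (v : ℝ × ℝ) :
    HasDerivAt (fun s => fderiv ℝ (uncurry W) (s, y) v)
      (fderiv ℝ (fderiv ℝ (uncurry W)) (x, y) (1, 0) v) x := by
  simpa using hW.differentiableAt_fderiv.hasFDerivAt.hasDerivAt_slice_fst.clm_apply
    (hasDerivAt_const x v)

theorem hasDerivAt_fderiv_apply_slice_snd (v : ℝ × ℝ) :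
    HasDerivAt (fun t => fderiv ℝ (uncurry W) (x, t) v)
      (fderiv ℝ (fderiv ℝ (uncurry W)) (x, y) (0, 1) v) y := by
  simpa using hW.differentiableAt_fderiv.hasFDerivAt.hasDerivAt_slice_snd.clm_apply
    (hasDerivAt_const y v)

theorem hasDerivAt_PradE_fst :
    HasDerivAt (fun s => PradE W s y) (y ^ 2 * (3 * x ^ 2 * fderiv ℝ (uncurry W) (x, y) (0, 1)
      + x ^ 3 * fderiv ℝ (fderiv ℝ (uncurry W)) (x, y) (1, 0) (0, 1))) x := by
  have h := ((hasDerivAt_pow 3 x).fun_mul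
    (hasDerivAt_fderiv_apply_slice_fst hW (0, 1))).const_mul (y ^ 2)
  refine (h.congr_of_eventuallyEq ?_).congr_deriv (by ring)
  filter_upwards [hW.eventually_differentiableAt.slice_fst] with s hs
  rw [PradE_eq_fderiv hs]
  ring

theorem hasDerivAt_PradE_snd :
    HasDerivAt (fun t => PradE W x t) (x ^ 3 * (2 * y * fderiv ℝ (uncurry W) (x, y) (0, 1)
      + y ^ 2 * fderiv ℝ (fderiv ℝ (uncurry W)) (x, y) (0, 1) (0, 1))) y := by
  have h := ((hasDerivAt_pow 2 y).fun_mul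
    (hasDerivAt_fderiv_apply_slice_snd hW (0, 1))).const_mul (x ^ 3)
  refine (h.congr_of_eventuallyEq ?_).congr_deriv (by ring)
  filter_upwards [hW.eventually_differentiableAt.slice_snd] with t ht
  rw [PradE_eq_fderiv ht]
  ring

theorem hasDerivAt_PtanE_snd :
    HasDerivAt (fun t => PtanE W x t) (1 / 2 * x ^ 3 *
      (x * fderiv ℝ (uncurry W) (x, y) (1, 0) - 2 * y * fderiv ℝ (uncurry W) (x, y) (0, 1)
        + y * (x * fderiv ℝ (fderiv ℝ (uncurry W)) (x, y) (0, 1) (1, 0)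
          - y * fderiv ℝ (fderiv ℝ (uncurry W)) (x, y) (0, 1) (0, 1)))) y := by
  have hbracket := ((hasDerivAt_fderiv_apply_slice_snd hW (1, 0)).const_mul x).fun_sub
    ((hasDerivAt_id' y).fun_mul (hasDerivAt_fderiv_apply_slice_snd hW (0, 1)))
  have h := ((hasDerivAt_id' y).fun_mul hbracket).const_mul (1 / 2 * x ^ 3)
  refine (h.congr_of_eventuallyEq ?_).congr_deriv (by ring)
  filter_upwards [hW.eventually_differentiableAt.slice_snd] with t ht
  rw [PtanE_eq_fderiv ht]
  ring

end Pressures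

/-- For hyperelastic materials with equal pressures on the line y = 1,
    x ∂_x P_rad(x,1) + 2Θ(x,1) = 3 ∂_y P_rad(x,1), where
    Θ(x,1) = ∂_y P_rad(x,1) − ∂_y P_tan(x,1). -/
theorem hyperelastic_center_identity
    (W : ℝ → ℝ → ℝ)
    (hW : ContDiffOn ℝ 3 (fun p : ℝ × ℝ => W p.1 p.2) (Ioi 0 ×ˢ Ioi 0))
    (hiso : ∀ x > (0 : ℝ), PradE W x 1 = PtanE W x 1) :
    ∀ x > (0 : ℝ),
      x * deriv (fun s => PradE W s 1) x
        + 2 * (deriv (fun t => PradE W x t) 1 - deriv (fun t => PtanE W x t) 1)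
      = 3 * deriv (fun t => PradE W x t) 1 := by
  intro x hx
  have hC : ContDiffAt ℝ 2 (uncurry W) (x, 1) :=
    (hW.contDiffAt (prod_mem_nhds (Ioi_mem_nhds hx) (Ioi_mem_nhds one_pos))).of_le (by norm_num)
  have hcenter := hiso x hx
  rw [PradE_eq_fderiv (hC.differentiableAt two_ne_zero),
    PtanE_eq_fderiv (hC.differentiableAt two_ne_zero)] at hcenter
  rw [(hasDerivAt_PradE_fst hC).deriv, (hasDerivAt_PradE_snd hC).deriv,
    (hasDerivAt_PtanE_snd hC).deriv, (hC.isSymmSndFDerivAt (by simp)).eq (0, 1) (1, 0)]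
  linear_combination 2 * hcenter
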